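/- In the free commutative nonassociative algebra K(x) on one variable x: (i) if f is a K-linear combination of the monomials x, x², x³ (so that in particular f is any candidate train polynomial of degree (2) or (3)) and ∂_x(f) = 0, then f = 0; (ii) for every n ≥ 4 and every commutative nonassociative monomial w of degree n with w ≠ x^n, there exists a unique element P_w of the K-linear span of the principal powers {x^k : 1 ≤ k ≤ n−1} such that ε(P_w) = 1 and ∂_x(w − P_w) = 0; moreover the coefficients of P_w are images of integers. Consequently w − P_w is a Peirce-evanescent identity. -/

import Mathlib

namespace Evanescent

universe u v

variable {T : Type u}

/-- The commutativity relation on the free magma on `T`. -/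
inductive CommRel (T : Type u) : FreeMagma T → FreeMagma T → Prop
  | comm (a b : FreeMagma T) : CommRel T (a * b) (b * a)
  | mul_left {a b : FreeMagma T} (c : FreeMagma T) :
      CommRel T a b → CommRel T (a * c) (b * c)
  | mul_right (c : FreeMagma T) {a b : FreeMagma T} :
      CommRel T a b → CommRel T (c * a) (c * b)

/-- The free commutative magma on `T`: the set of commutative nonassociative
monomials (words) in the variables `T`. -/
def FreeCommMagma (T : Type u) : Type u := Quot (CommRel T)

namespace FreeCommMagma

instance : Mul (FreeCommMagma T) :=
  ⟨Quot.map₂ (· * ·) (fun a _ _ h => CommRel.mul_right a h)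
    (fun _ _ b h => CommRel.mul_left b h)⟩

/-- The class of a nonassociative word in the free commutative magma. -/
def mk (w : FreeMagma T) : FreeCommMagma T := Quot.mk (CommRel T) w

/-- The generator of the free commutative magma corresponding to a variable. -/
def of (t : T) : FreeCommMagma T := mk (FreeMagma.of t)

@[simp] lemma mk_mul (a b : FreeMagma T) : mk a * mk b = mk (a * b) := rfl

protected lemma mul_comm (a b : FreeCommMagma T) : a * b = b * a := by
  induction a using Quot.ind
  induction b using Quot.ind
  exact Quot.sound (CommRel.comm _ _)

instance : CommMagma (FreeCommMagma T) := ⟨FreeCommMagma.mul_comm⟩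

end FreeCommMagma

section Peirce

variable (R : Type v) [Semiring R] [DecidableEq T]

/-- The Peirce polynomial of a (noncommutative) nonassociative word, with
coefficients in `R`. -/
noncomputable def peirceAux (i : T) : FreeMagma T → Polynomial R
  | .of j => if j = i then 1 else 0
  | .mul u v => Polynomial.X * (peirceAux i u + peirceAux i v)

@[simp] lemma peirceAux_mul (i : T) (u v : FreeMagma T) :
    peirceAux R i (u * v) = Polynomial.X * (peirceAux R i u + peirceAux R i v) := rfl

@[simp] lemma peirceAux_of (i j : T) :
    peirceAux R i (FreeMagma.of j) = if j = i then 1 else 0 := rfl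

/-- The number of occurrences of the variable `i` in a nonassociative word. -/
def countAux (i : T) : FreeMagma T → ℕ
  | .of j => if j = i then 1 else 0
  | .mul u v => countAux i u + countAux i v

@[simp] lemma countAux_mul (i : T) (u v : FreeMagma T) :
    countAux i (u * v) = countAux i u + countAux i v := rfl

lemma peirceAux_respects (i : T) {a b : FreeMagma T} (h : CommRel T a b) :
    peirceAux R i a = peirceAux R i b := by
  induction h with
  | comm a b => simp [add_comm]
  | mul_left c h ih => simp [ih]
  | mul_right c h ih => simp [ih]

lemma countAux_respects (i : T) {a b : FreeMagma T} (h : CommRel T a b) :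
    countAux i a = countAux i b := by
  induction h with
  | comm a b => simp [Nat.add_comm]
  | mul_left c h ih => simp [ih]
  | mul_right c h ih => simp [ih]

/-- The Peirce polynomial `∂ᵢ(w)` of a commutative nonassociative monomial `w`,
determined by `∂ᵢ(tᵢ) = 1`, `∂ᵢ(tⱼ) = 0` for `j ≠ i`, and
`∂ᵢ(u·v) = X·(∂ᵢ(u) + ∂ᵢ(v))`. -/
noncomputable def FreeCommMagma.peirce (i : T) : FreeCommMagma T → Polynomial R :=
  Quot.lift (peirceAux R i) fun _ _ h => peirceAux_respects R i h

/-- The number of occurrences (degree) of the variable `i` in a commutative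
nonassociative monomial. -/
def FreeCommMagma.count (i : T) : FreeCommMagma T → ℕ :=
  Quot.lift (countAux i) fun _ _ h => countAux_respects i h

end Peirce

/-- Principal powers of an element of a magma: `ppow a n = a^(n+1)`,
i.e. `ppow a 0 = a` and `ppow a (n+1) = a * (ppow a n)`. -/
def ppow {M : Type v} [Mul M] (a : M) : ℕ → M
  | 0 => a
  | n + 1 => a * ppow a n

/-- Iterated left multiplication: `lpow a r g = a^{{r}} g`, i.e. `lpow a 0 g = g` and
`lpow a (r+1) g = a * (lpow a r g)`. -/
def lpow {M : Type v} [Mul M] (a : M) : ℕ → M → M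
  | 0, g => g
  | r + 1, g => a * lpow a r g

section Algebra

variable (K : Type v) [Field K]

/-- A commutative nonassociative monomial, viewed as an element of the free
commutative nonassociative algebra `K(T)` (realized as the magma algebra of the
free commutative magma). -/
noncomputable def mono (w : FreeCommMagma T) : MonoidAlgebra K (FreeCommMagma T) :=
  MonoidAlgebra.single w 1

/-- The augmentation (sum of the coefficients) of an element of the free
commutative nonassociative algebra. -/
noncomputable def aug : MonoidAlgebra K (FreeCommMagma T) →ₗ[K] K :=
  (Finsupp.lsum K fun _ => LinearMap.id) ∘ₗ (MonoidAlgebra.coeffLinearEquiv K).toLinearMap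

/-- The Peirce polynomial `∂ᵢ : K(T) → K[X]`, the `K`-linear map determined on
monomials by `∂ᵢ(tᵢ) = 1`, `∂ᵢ(tⱼ) = 0` for `j ≠ i`, and `∂ᵢ(u·v) = X·(∂ᵢ(u) + ∂ᵢ(v))`. -/
noncomputable def Dp [DecidableEq T] (i : T) :
    MonoidAlgebra K (FreeCommMagma T) →ₗ[K] Polynomial K :=
  (Finsupp.lsum K fun w => LinearMap.toSpanSingleton K (Polynomial K)
    (FreeCommMagma.peirce K i w)) ∘ₗ (MonoidAlgebra.coeffLinearEquiv K).toLinearMap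

/-- The free commutative nonassociative algebra is commutative. -/
lemma fca_mul_comm (f g : MonoidAlgebra K (FreeCommMagma T)) : f * g = g * f := by
  rw [MonoidAlgebra.mul_def, MonoidAlgebra.mul_def, Finsupp.sum_comm]
  refine Finsupp.sum_congr fun a _ => Finsupp.sum_congr fun c _ => ?_
  rw [FreeCommMagma.mul_comm, mul_comm (f.coeff c) (g.coeff a)]

end Algebra

section Subst

variable (K : Type v) [Field K] {A : Type*} [Mul A]

/-- Evaluation of a nonassociative word under a substitution of the variables. -/
def evalAux (ρ : T → A) : FreeMagma T → A
  | .of t => ρ t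
  | .mul u v => evalAux ρ u * evalAux ρ v

@[simp] lemma evalAux_mul (ρ : T → A) (u v : FreeMagma T) :
    evalAux ρ (u * v) = evalAux ρ u * evalAux ρ v := rfl

/-- Evaluation of a commutative nonassociative monomial in a commutative magma
under a substitution of the variables. -/
def FreeCommMagma.eval (hA : ∀ a b : A, a * b = b * a) (ρ : T → A) :
    FreeCommMagma T → A :=
  Quot.lift (evalAux ρ) (by
    intro a b h
    induction h with
    | comm a b => exact hA _ _
    | mul_left c h ih => simp [ih]
    | mul_right c h ih => simp [ih])

/-- The substitution homomorphism `ρ̂ : K(T) → A` extending a substitution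
`ρ : T → A` of the variables, for `A` a commutative nonassociative `K`-algebra. -/
noncomputable def subst [AddCommMonoid A] [Module K A]
    (hA : ∀ a b : A, a * b = b * a) (ρ : T → A)
    (f : MonoidAlgebra K (FreeCommMagma T)) : A :=
  f.coeff.sum fun w c => c • FreeCommMagma.eval hA ρ w

end Subst

/-- The list of the leaves of a nonassociative word (a rooted binary tree with
leaves labeled by the variables), together with their heights. -/
def leaves : FreeMagma T → List (T × ℕ)
  | .of t => [(t, 0)]
  | .mul u v => (leaves u ++ leaves v).map fun p => (p.1, p.2 + 1)

end Evanescent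
namespace Evanescent

/-- The single variable `x` of `K(x)`, as a monomial. -/
def x1 : FreeCommMagma Unit := FreeCommMagma.of ()

end Evanescent

/-!
The Peirce polynomials `∂ₓ(x^(k+1)) = X + ⋯ + X^(k-1) + 2X^k` have degree `k` when `2 ≠ 0`, so
they are linearly independent and `∂ₓ` is injective on the span of the principal powers: this
gives (i) and the uniqueness in (ii).

For existence, the rule `∂ₓ(fg) = X(ε(g)∂ₓf + ε(f)∂ₓg)` shows that `P_x = x`,
`P_{uv} = x(P_u + P_v) - x²` satisfies `∂ₓP_u = ∂ₓu` and `ε(P_u) = 1`. By construction `P_u` is an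
integral combination of `x, …, xⁿ` when `u` has degree `n`, and the coefficient of `xⁿ` vanishes:
twice it is the coefficient of `X^(n-1)` in `∂ₓu`, which counts the leaves of `u` at depth `n - 1`
and is zero unless `u = xⁿ`.
-/

theorem LinearMap.injOn_span_of_linearIndependent_comp {ι R M M' : Type*} [Semiring R]
    [AddCommMonoid M] [Module R M] [AddCommMonoid M'] [Module R M'] {v : ι → M}
    (f : M →ₗ[R] M') (h : LinearIndependent R (f ∘ v)) :
    Set.InjOn f (Submodule.span R (Set.range v)) := by
  rw [← Finsupp.range_linearCombination]
  rintro _ ⟨l₁, rfl⟩ _ ⟨l₂, rfl⟩ heq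
  exact congrArg _ <| h <| by simpa [Finsupp.linearCombination_linear_comp] using heq

namespace Evanescent

open Polynomial

namespace FreeCommMagma

variable {T : Type*} [DecidableEq T] {R : Type*} [Semiring R]

@[simp] lemma peirce_mk (i : T) (u : FreeMagma T) : peirce R i (mk u) = peirceAux R i u := rfl

@[simp] lemma peirce_of (i : T) : peirce R i (of i) = 1 := by simp [of]

@[simp] lemma peirce_mul (i : T) (a b : FreeCommMagma T) :
    peirce R i (a * b) = X * (peirce R i a + peirce R i b) := by
  induction a using Quot.ind
  induction b using Quot.ind
  rfl

@[simp] lemma count_of (i : T) : count i (of i) = 1 := by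
  change countAux i (.of i) = 1
  simp [countAux]

@[simp] lemma count_mul (i : T) (a b : FreeCommMagma T) :
    count i (a * b) = count i a + count i b := by
  induction a using Quot.ind
  induction b using Quot.ind
  rfl

end FreeCommMagma

section PrincipalPowers

variable {R : Type*} [Semiring R]

@[simp] lemma ppow_zero {M : Type*} [Mul M] (a : M) : ppow a 0 = a := rfl

lemma ppow_succ {M : Type*} [Mul M] (a : M) (k : ℕ) : ppow a (k + 1) = a * ppow a k := rfl

lemma count_ppow (k : ℕ) : FreeCommMagma.count () (ppow x1 k) = k + 1 := by
  induction k with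
  | zero => exact FreeCommMagma.count_of ()
  | succ k ih =>
    rw [ppow_succ, FreeCommMagma.count_mul, ih, x1, FreeCommMagma.count_of, add_comm]

lemma peirce_ppow_succ (k : ℕ) :
    FreeCommMagma.peirce R () (ppow x1 (k + 1)) =
      X * (1 + FreeCommMagma.peirce R () (ppow x1 k)) := by
  rw [ppow_succ, FreeCommMagma.peirce_mul]
  rfl

lemma coeff_peirce_ppow_of_lt {k j : ℕ} (h : k < j) :
    (FreeCommMagma.peirce R () (ppow x1 k)).coeff j = 0 := by
  induction k generalizing j with
  | zero => simp [x1, coeff_one, h.ne']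
  | succ k ih =>
    obtain ⟨j, rfl⟩ : ∃ j', j = j' + 1 := ⟨j - 1, by omega⟩
    rw [peirce_ppow_succ, coeff_X_mul, coeff_add, ih (by omega), coeff_one,
      if_neg (by omega), add_zero]

lemma coeff_peirce_ppow_self {k : ℕ} (hk : k ≠ 0) :
    (FreeCommMagma.peirce R () (ppow x1 k)).coeff k = 2 := by
  obtain ⟨k, rfl⟩ := Nat.exists_eq_succ_of_ne_zero hk
  induction k with
  | zero => simp [ppow, x1, one_add_one_eq_two]
  | succ k ih =>
    rw [peirce_ppow_succ, coeff_X_mul, coeff_add, ih k.succ_ne_zero, coeff_one, if_neg (by omega),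
      zero_add]

lemma degree_peirce_ppow (h2 : (2 : R) ≠ 0) (k : ℕ) :
    (FreeCommMagma.peirce R () (ppow x1 k)).degree = k := by
  refine degree_eq_of_le_of_coeff_ne_zero ?_ ?_
  · exact (degree_le_iff_coeff_zero _ _).mpr fun j hj =>
      coeff_peirce_ppow_of_lt (by exact_mod_cast hj)
  · rcases eq_or_ne k 0 with rfl | hk
    · simpa [x1] using fun h => h2 (by simp [← one_add_one_eq_two, h])
    · rwa [coeff_peirce_ppow_self hk]

lemma linearIndependent_peirce_ppow {K : Type*} [CommRing K] [IsDomain K] (h2 : (2 : K) ≠ 0) :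
    LinearIndependent K fun k => FreeCommMagma.peirce K () (ppow x1 k) :=
  (⟨_, degree_peirce_ppow h2⟩ : Polynomial.Sequence K).linearIndependent

lemma coeff_sum_smul_peirce_ppow (a : ℕ → R) {m : ℕ} (hm : m ≠ 0) :
    (∑ k ∈ Finset.range (m + 1), a k • FreeCommMagma.peirce R () (ppow x1 k)).coeff m
      = a m * 2 := by
  rw [finsetSum_coeff, Finset.sum_range_succ, Finset.sum_eq_zero fun k hk => by
    rw [coeff_smul, coeff_peirce_ppow_of_lt (Finset.mem_range.mp hk), smul_zero],
    zero_add, coeff_smul, coeff_peirce_ppow_self hm, smul_eq_mul]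

end PrincipalPowers

section Leaves

variable {R : Type*} [Semiring R]

lemma one_le_countAux (u : FreeMagma Unit) : 1 ≤ countAux () u := by
  induction u with
  | ih1 => simp [countAux]
  | ih2 a b iha _ => rw [countAux_mul]; omega

lemma eq_of_countAux_eq_one {u : FreeMagma Unit} (h : countAux () u = 1) : u = .of () := by
  cases u with
  | of => rfl
  | mul a b =>
    have := one_le_countAux a
    have := one_le_countAux b
    rw [show a.mul b = a * b from rfl, countAux_mul] at h
    omega

lemma coeff_peirceAux_eq_zero {u : FreeMagma Unit} {j : ℕ} (h : countAux () u ≤ j) :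
    (peirceAux R () u).coeff j = 0 := by
  induction u generalizing j with
  | ih1 => simp_all [countAux, coeff_one, Nat.one_le_iff_ne_zero.mp h]
  | ih2 a b iha ihb =>
    have := one_le_countAux a
    have := one_le_countAux b
    rw [countAux_mul] at h
    obtain ⟨j, rfl⟩ : ∃ j', j = j' + 1 := ⟨j - 1, by omega⟩
    rw [peirceAux_mul, coeff_X_mul, coeff_add, iha (by omega), ihb (by omega), add_zero]

/-- The coefficient of `X^m` counts the leaves at depth `m`, and a tree with `m + 1` leaves has
a leaf at depth `m` only if it is a caterpillar. -/
lemma mk_eq_ppow_of_coeff_peirceAux_ne_zero {u : FreeMagma Unit} {m : ℕ}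
    (hu : countAux () u = m + 1) (h : (peirceAux R () u).coeff m ≠ 0) :
    FreeCommMagma.mk u = ppow x1 m := by
  induction u generalizing m with
  | ih1 =>
    obtain rfl : m = 0 := by simpa [countAux] using hu
    rfl
  | ih2 a b iha ihb =>
    have := one_le_countAux a
    have := one_le_countAux b
    rw [countAux_mul] at hu
    obtain ⟨m, rfl⟩ : ∃ m', m = m' + 1 := ⟨m - 1, by omega⟩
    rw [peirceAux_mul, coeff_X_mul, coeff_add] at h
    rw [← FreeCommMagma.mk_mul, ppow_succ]
    rcases ne_or_eq ((peirceAux R () a).coeff m) 0 with ha | ha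
    · have hca : countAux () a = m + 1 := by
        have := mt coeff_peirceAux_eq_zero ha
        omega
      obtain rfl : b = .of () := eq_of_countAux_eq_one (by omega)
      rw [iha hca ha, mul_comm]
      rfl
    · rw [ha, zero_add] at h
      have hcb : countAux () b = m + 1 := by
        have := mt coeff_peirceAux_eq_zero h
        omega
      obtain rfl : a = .of () := eq_of_countAux_eq_one (by omega)
      rw [ihb hcb h]
      rfl

end Leaves

section Augmentation

open MonoidAlgebra

variable {T : Type*} {K : Type*} [Field K]

@[simp] lemma aug_single (w : FreeCommMagma T) (c : K) : aug K (single w c) = c := by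
  simp [aug, coeffLinearEquiv]

@[simp] lemma aug_mono (w : FreeCommMagma T) : aug K (mono K w) = 1 := aug_single w 1

@[simp] lemma Dp_single [DecidableEq T] (i : T) (w : FreeCommMagma T) (c : K) :
    Dp K i (single w c) = c • FreeCommMagma.peirce K i w := by
  simp [Dp, coeffLinearEquiv]

@[simp] lemma Dp_mono [DecidableEq T] (i : T) (w : FreeCommMagma T) :
    Dp K i (mono K w) = FreeCommMagma.peirce K i w := by
  simp [mono]

lemma aug_mul (f g : MonoidAlgebra K (FreeCommMagma T)) : aug K (f * g) = aug K f * aug K g := by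
  induction f using MonoidAlgebra.induction_linear with
  | zero => simp
  | add f₁ f₂ h₁ h₂ => simp [add_mul, h₁, h₂]
  | single v c =>
    induction g using MonoidAlgebra.induction_linear with
    | zero => simp
    | add g₁ g₂ h₁ h₂ => simp [mul_add, h₁, h₂]
    | single w d => simp

lemma Dp_mul [DecidableEq T] (i : T) (f g : MonoidAlgebra K (FreeCommMagma T)) :
    Dp K i (f * g) = X * (aug K g • Dp K i f + aug K f • Dp K i g) := by
  induction f using MonoidAlgebra.induction_linear with
  | zero => simp
  | add f₁ f₂ h₁ h₂ => simp only [add_mul, map_add, h₁, h₂, add_smul, smul_add]; ring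
  | single v c =>
    induction g using MonoidAlgebra.induction_linear with
    | zero => simp
    | add g₁ g₂ h₁ h₂ => simp only [mul_add, map_add, h₁, h₂, add_smul, smul_add]; ring
    | single w d =>
      simp only [single_mul_single, Dp_single, aug_single, FreeCommMagma.peirce_mul,
        smul_eq_C_mul, C_mul]
      ring

lemma mono_notMem_span_image {s : Set (FreeCommMagma T)} {w : FreeCommMagma T} (hw : w ∉ s) :
    mono K w ∉ Submodule.span K (mono K '' s) := by
  rw [show mono K = fun w => single w (1 : K) from rfl, ← supported_eq_span_single,
    mem_supported']
  exact fun h => one_ne_zero (α := K) (by simpa using h w hw)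

end Augmentation

section PrincipalPowerSpan

open MonoidAlgebra

variable {K : Type*} [Field K]

lemma injOn_Dp_span_ppow (h2 : (2 : K) ≠ 0) (s : Set ℕ) :
    Set.InjOn (Dp K ()) (Submodule.span K ((fun k => mono K (ppow x1 k)) '' s)) :=
  ((Dp K ()).injOn_span_of_linearIndependent_comp <| by
    simpa [Function.comp_def] using linearIndependent_peirce_ppow h2).mono
    (Submodule.span_mono (Set.image_subset_range _ _))

lemma mono_notMem_span_ppow {w : FreeCommMagma Unit} {m : ℕ}
    (hw : FreeCommMagma.count () w = m + 1) :
    mono K w ∉ Submodule.span K ((fun k => mono K (ppow x1 k)) '' Set.Iio m) := by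
  rw [← Set.image_image (mono K) (ppow x1)]
  refine mono_notMem_span_image fun ⟨k, hk, heq⟩ => ?_
  have := congrArg (FreeCommMagma.count ()) heq
  rw [count_ppow, hw] at this
  exact (Set.mem_Iio.mp hk).ne (by omega)

lemma mono_x1_mul_mono_ppow (k : ℕ) :
    mono K x1 * mono K (ppow x1 k) = mono K (ppow x1 (k + 1)) := by
  rw [mono, mono, single_mul_single, one_mul]
  rfl

lemma mono_x1_mul_mem_span_int {f : MonoidAlgebra K (FreeCommMagma Unit)} {N : ℕ}
    (hf : f ∈ Submodule.span ℤ ((fun k => mono K (ppow x1 k)) '' Set.Iio N)) :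
    mono K x1 * f ∈ Submodule.span ℤ ((fun k => mono K (ppow x1 k)) '' Set.Iio (N + 1)) := by
  refine Submodule.span_mono ?_ <| Submodule.apply_mem_span_image_of_mem_span
    (AddMonoidHom.mulLeft (mono K x1)).toIntLinearMap hf
  rintro _ ⟨_, ⟨k, hk, rfl⟩, rfl⟩
  exact ⟨k + 1, by simpa using hk, (mono_x1_mul_mono_ppow k).symm⟩

end PrincipalPowerSpan

section MatchPoly

variable {K : Type*} [Field K]

/-- The element `P_w` of the statement, for `w` the class of `u`. -/
noncomputable def matchPoly (K : Type*) [Field K] :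
    FreeMagma Unit → MonoidAlgebra K (FreeCommMagma Unit)
  | .of _ => mono K x1
  | .mul u v => mono K x1 * (matchPoly K u + matchPoly K v) - mono K (ppow x1 1)

lemma matchPoly_mul (u v : FreeMagma Unit) :
    matchPoly K (u * v) = mono K x1 * (matchPoly K u + matchPoly K v) - mono K (ppow x1 1) :=
  rfl

lemma aug_matchPoly (u : FreeMagma Unit) : aug K (matchPoly K u) = 1 := by
  induction u with
  | ih1 => exact aug_mono _
  | ih2 a b iha ihb =>
    rw [matchPoly_mul, map_sub, aug_mul, map_add, iha, ihb, aug_mono, aug_mono]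
    norm_num

lemma Dp_matchPoly (u : FreeMagma Unit) : Dp K () (matchPoly K u) = peirceAux K () u := by
  induction u with
  | ih1 => simp [matchPoly, x1]
  | ih2 a b iha ihb =>
    rw [matchPoly_mul, map_sub, Dp_mul, map_add, map_add, iha, ihb, aug_matchPoly, aug_matchPoly,
      aug_mono, Dp_mono, Dp_mono, peirce_ppow_succ, peirceAux_mul]
    simp only [ppow_zero, x1, FreeCommMagma.peirce_of, add_smul, one_smul]
    ring

lemma matchPoly_mem_span_int (u : FreeMagma Unit) :
    matchPoly K u ∈
      Submodule.span ℤ ((fun k => mono K (ppow x1 k)) '' Set.Iio (countAux () u)) := by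
  induction u with
  | ih1 => exact Submodule.subset_span ⟨0, by simp [countAux], rfl⟩
  | ih2 a b iha ihb =>
    have := one_le_countAux a
    have := one_le_countAux b
    obtain ⟨N, hN⟩ : ∃ N, countAux () (a * b) = N + 1 :=
      ⟨countAux () a + countAux () b - 1, by rw [countAux_mul]; omega⟩
    have hab := countAux_mul () a b
    have hle {M : ℕ} (hM : M ≤ N) :
        Submodule.span ℤ ((fun k => mono K (ppow x1 k)) '' Set.Iio M) ≤
          Submodule.span ℤ ((fun k => mono K (ppow x1 k)) '' Set.Iio N) :=
      Submodule.span_mono (Set.image_mono (Set.Iio_subset_Iio hM))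
    rw [matchPoly_mul, hN]
    refine sub_mem (mono_x1_mul_mem_span_int (add_mem (hle ?_ iha) (hle ?_ ihb)))
      (Submodule.subset_span ⟨1, Set.mem_Iio.mpr ?_, rfl⟩) <;> omega

lemma exists_int_coeffs_matchPoly (h2 : (2 : K) ≠ 0) {u : FreeMagma Unit} {m : ℕ}
    (hu : countAux () u = m + 1) (hne : FreeCommMagma.mk u ≠ ppow x1 m) :
    ∃ c : ℕ → ℤ,
      matchPoly K u = ∑ k ∈ Finset.range m, (c k : K) • mono K (ppow x1 k) := by
  have hm : m ≠ 0 := by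
    rintro rfl
    exact hne (by rw [eq_of_countAux_eq_one hu]; rfl)
  have hspan := matchPoly_mem_span_int (K := K) u
  rw [hu, ← Finset.coe_range, Submodule.mem_span_image_finset_iff_exists_fun'] at hspan
  obtain ⟨c, hc⟩ := hspan
  simp_rw [← Int.cast_smul_eq_zsmul K] at hc
  have htop : (c m : K) * 2 = 0 := by
    have hDp := congrArg (fun f => (Dp K () f).coeff m) hc
    simp only [map_sum, map_smul, Dp_mono, Dp_matchPoly] at hDp
    rw [← coeff_sum_smul_peirce_ppow (fun k => (c k : K)) hm, hDp]
    by_contra hcoeff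
    exact hne (mk_eq_ppow_of_coeff_peirceAux_ne_zero hu hcoeff)
  refine ⟨c, ?_⟩
  rw [← hc, Finset.sum_range_succ, (mul_eq_zero.mp htop).resolve_right h2, zero_smul, add_zero]

lemma matchPoly_mem_span (h2 : (2 : K) ≠ 0) {u : FreeMagma Unit} {m : ℕ}
    (hu : countAux () u = m + 1) (hne : FreeCommMagma.mk u ≠ ppow x1 m) :
    matchPoly K u ∈ Submodule.span K ((fun k => mono K (ppow x1 k)) '' Set.Iio m) := by
  obtain ⟨c, hc⟩ := exists_int_coeffs_matchPoly h2 hu hne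
  rw [hc]
  exact Submodule.sum_mem _ fun k hk =>
    Submodule.smul_mem _ _ (Submodule.subset_span ⟨k, by simpa using hk, rfl⟩)

end MatchPoly

end Evanescent

open Evanescent in
/-- (i) No nonzero train polynomial of degree `(2)` or `(3)` is
Peirce-evanescent; (ii) for `n ≥ 4` and every monomial `w ≠ xⁿ` of degree `n` there is a
unique `P_w` in the span of the principal powers `x^k`, `1 ≤ k ≤ n-1`, with `ε(P_w) = 1`
and `∂ₓ(w - P_w) = 0`; moreover `P_w` has integer coefficients and `w - P_w` is a
Peirce-evanescent identity.  (Here `ppow x1 k` denotes `x^(k+1)`.) -/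
theorem train_identities_univariate
    {K : Type*} [Field K] (hchar : (2 : K) ≠ 0) :
    (∀ a b c : K,
      Dp K () (a • mono K (ppow x1 0) + b • mono K (ppow x1 1) + c • mono K (ppow x1 2)) = 0 →
      a • mono K (ppow x1 0) + b • mono K (ppow x1 1) + c • mono K (ppow x1 2) = 0) ∧
    (∀ n : ℕ, 4 ≤ n → ∀ w : FreeCommMagma Unit,
      FreeCommMagma.count () w = n → w ≠ ppow x1 (n - 1) →
      (∃! P : MonoidAlgebra K (FreeCommMagma Unit),
        P ∈ Submodule.span K ((fun k => mono K (ppow x1 k)) '' Set.Iio (n - 1)) ∧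
        aug K P = 1 ∧ Dp K () (mono K w - P) = 0) ∧
      (∀ P : MonoidAlgebra K (FreeCommMagma Unit),
        P ∈ Submodule.span K ((fun k => mono K (ppow x1 k)) '' Set.Iio (n - 1)) →
        aug K P = 1 → Dp K () (mono K w - P) = 0 →
        (∃ c : ℕ → ℤ, P = ∑ k ∈ Finset.range (n - 1), (c k : K) • mono K (ppow x1 k)) ∧
        mono K w - P ≠ 0 ∧ aug K (mono K w - P) = 0)) := by
  refine ⟨fun a b c h => injOn_Dp_span_ppow hchar Set.univ ?_ (zero_mem _) (by rw [h, map_zero]),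
    fun n hn w hcount hne => ?_⟩
  · have hmem (k : ℕ) : mono K (ppow x1 k) ∈
        Submodule.span K ((fun k => mono K (ppow x1 k)) '' Set.univ) :=
      Submodule.subset_span ⟨k, trivial, rfl⟩
    exact add_mem (add_mem (Submodule.smul_mem _ a (hmem 0)) (Submodule.smul_mem _ b (hmem 1)))
      (Submodule.smul_mem _ c (hmem 2))
  obtain ⟨u, rfl⟩ : ∃ u, FreeCommMagma.mk u = w := Quot.exists_rep w
  obtain ⟨m, rfl⟩ : ∃ m, n = m + 1 := ⟨n - 1, by omega⟩
  rw [Nat.add_sub_cancel] at hne ⊢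
  have hspan := matchPoly_mem_span hchar hcount hne
  have huniq (P) (hP : P ∈ Submodule.span K ((fun k => mono K (ppow x1 k)) '' Set.Iio m))
      (hDp : Dp K () (mono K (FreeCommMagma.mk u) - P) = 0) : P = matchPoly K u := by
    rw [map_sub, sub_eq_zero] at hDp
    refine injOn_Dp_span_ppow hchar _ hP hspan ?_
    rw [← hDp, Dp_mono, Dp_matchPoly, FreeCommMagma.peirce_mk]
  refine ⟨⟨_, ⟨hspan, aug_matchPoly u, ?_⟩, fun P hP => huniq P hP.1 hP.2.2⟩,
    fun P hP haug hDp => ?_⟩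
  · rw [map_sub, Dp_mono, Dp_matchPoly, FreeCommMagma.peirce_mk, sub_self]
  obtain rfl := huniq P hP hDp
  exact ⟨exists_int_coeffs_matchPoly hchar hcount hne,
    sub_ne_zero.mpr fun h => mono_notMem_span_ppow hcount (h ▸ hP),
    by rw [map_sub, aug_mono, haug, sub_self]⟩
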